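/- arXiv:1906.02265 — 3 statements merged into one kernel-verified Lean document; each statement's English description precedes it below -/
import Mathlib

section
/- Let Y be a real-valued continuous random variable, not almost surely zero, taking both positive and negative values with positive probability, whose moment generating function φ(λ) = E[e^{λY}] is finite for all real λ. Then there exists λ* > 0 with E[e^{λ*Y}] = 1 if and only if E[Y] < 0. -/
/-!
Pointwise `exp x ≥ 1 + x`, strictly where `x ≠ 0`, gives `φ(λ) > 1 + λ E[Y]` for `λ > 0`, so a
root `λ* > 0` of `φ = 1` forces `E[Y] < 0`. Conversely `φ(0) = 1` and `φ'(0) = E[Y] < 0`, so `φ`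
drops below `1` just right of `0`; the Chernoff bound `φ(λ) ≥ e^{λδ} P(Y ≥ δ)` with
`P(Y ≥ δ) > 0` makes `φ` tend to infinity; the intermediate value theorem for the continuous `φ`
gives the root.
-/

open MeasureTheory Filter Topology Real Set

namespace ProbabilityTheory

variable {Ω : Type*} [MeasurableSpace Ω] {μ : Measure Ω} {Y : Ω → ℝ}

lemma one_add_mul_integral_lt_mgf [IsProbabilityMeasure μ] {l : ℝ} (hl : 0 < l)
    (hpos : 0 < μ {ω | 0 < Y ω}) (hint : Integrable Y μ)
    (hexp : Integrable (fun ω ↦ exp (l * Y ω)) μ) :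
    1 + l * μ[Y] < mgf Y μ l := by
  have hlin : Integrable (fun ω ↦ 1 + l * Y ω) μ := (integrable_const 1).add (hint.const_mul l)
  have hgap : 0 < ∫ ω, (exp (l * Y ω) - (1 + l * Y ω)) ∂μ := by
    rw [integral_pos_iff_support_of_nonneg
      (fun ω ↦ sub_nonneg.2 (add_one_le_exp _ |>.trans_eq' (add_comm _ _))) (hexp.sub hlin)]
    refine hpos.trans_le (measure_mono fun ω (hω : 0 < Y ω) ↦ ?_)
    have := add_one_lt_exp (mul_pos hl hω).ne'
    simp only [Function.mem_support]
    linarith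
  rw [integral_sub hexp hlin, integral_add (integrable_const 1) (hint.const_mul l),
    integral_const_mul] at hgap
  simpa [mgf] using hgap

lemma integral_neg_of_mgf_eq_one [IsProbabilityMeasure μ] {l : ℝ} (hl : 0 < l)
    (hpos : 0 < μ {ω | 0 < Y ω}) (hint : Integrable Y μ)
    (hexp : Integrable (fun ω ↦ exp (l * Y ω)) μ) (h1 : mgf Y μ l = 1) :
    μ[Y] < 0 := by
  have := one_add_mul_integral_lt_mgf hl hpos hint hexp
  rw [h1] at this
  exact neg_of_mul_neg_right (by linarith) hl.le

lemma exists_pos_mgf_lt_one [IsProbabilityMeasure μ] (h0 : 0 ∈ interior (integrableExpSet Y μ))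
    (hY : μ[Y] < 0) : ∃ l, 0 < l ∧ mgf Y μ l < 1 := by
  have hderiv : HasDerivAt (mgf Y μ) μ[Y] 0 := by simpa using hasDerivAt_mgf h0
  obtain ⟨l, hslope, hl⟩ := ((hderiv.hasDerivWithinAt (s := Ioi 0)).limsup_slope_le'
    (lt_irrefl 0) hY).and self_mem_nhdsWithin |>.exists
  refine ⟨l, hl, ?_⟩
  rw [slope_def_field, mgf_zero, sub_zero] at hslope
  have := (div_neg_iff.1 hslope).resolve_left fun h ↦ lt_asymm hl h.2
  linarith [this.1]

lemma exists_pos_measure_setOf_ge (hpos : 0 < μ {ω | 0 < Y ω}) :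
    ∃ δ, 0 < δ ∧ 0 < μ {ω | δ ≤ Y ω} := by
  have hcover : {ω | 0 < Y ω} = ⋃ n : ℕ, {ω | 1 / ((n : ℝ) + 1) ≤ Y ω} := by
    ext ω
    simp only [mem_ofPred_eq, mem_iUnion]
    exact ⟨fun h ↦ (exists_nat_one_div_lt h).imp fun _ ↦ le_of_lt,
      fun ⟨n, hn⟩ ↦ (Nat.one_div_pos_of_nat).trans_le hn⟩
  rw [hcover] at hpos
  obtain ⟨n, hn⟩ := exists_measure_pos_of_not_measure_iUnion_null hpos.ne'
  exact ⟨_, Nat.one_div_pos_of_nat, hn⟩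

lemma tendsto_mgf_atTop [IsFiniteMeasure μ] (hpos : 0 < μ {ω | 0 < Y ω})
    (h : ∀ t, Integrable (fun ω ↦ exp (t * Y ω)) μ) :
    Tendsto (mgf Y μ) atTop atTop := by
  obtain ⟨δ, hδ, hμδ⟩ := exists_pos_measure_setOf_ge hpos
  have hμδ' : 0 < μ.real {ω | δ ≤ Y ω} := ENNReal.toReal_pos hμδ.ne' (measure_ne_top _ _)
  have hgrowth : Tendsto (fun t ↦ exp (t * δ) * μ.real {ω | δ ≤ Y ω}) atTop atTop :=
    (tendsto_exp_atTop.comp (tendsto_id.atTop_mul_const hδ)).atTop_mul_const hμδ'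
  refine tendsto_atTop_mono' _ ?_ hgrowth
  filter_upwards [eventually_ge_atTop 0] with t ht
  have := measure_ge_le_exp_mul_mgf δ ht (h t)
  rw [neg_mul, exp_neg, inv_mul_eq_div, le_div_iff₀ (exp_pos _)] at this
  linarith

lemma exists_pos_mgf_eq_one [IsProbabilityMeasure μ] (hpos : 0 < μ {ω | 0 < Y ω})
    (h : ∀ t, Integrable (fun ω ↦ exp (t * Y ω)) μ) (hY : μ[Y] < 0) :
    ∃ l, 0 < l ∧ mgf Y μ l = 1 := by
  have h0 : (0 : ℝ) ∈ interior (integrableExpSet Y μ) := by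
    rw [show integrableExpSet Y μ = univ from eq_univ_of_forall h, interior_univ]
    exact mem_univ 0
  obtain ⟨l₀, hl₀, hlt⟩ := exists_pos_mgf_lt_one h0 hY
  obtain ⟨L, hgt, hL⟩ :=
    ((tendsto_mgf_atTop hpos h).eventually_gt_atTop 1).and (eventually_ge_atTop l₀) |>.exists
  obtain ⟨l, hl, heq⟩ :=
    intermediate_value_Icc hL (continuous_mgf h).continuousOn ⟨hlt.le, hgt.le⟩
  exact ⟨l, hl₀.trans_le hl.1, heq⟩

end ProbabilityTheory

open ProbabilityTheory

theorem stmt0_general {Ω : Type*} [MeasurableSpace Ω] (μ : Measure Ω) [IsProbabilityMeasure μ]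
    (Y : Ω → ℝ)
    (hpos : 0 < μ {ω | 0 < Y ω})
    (hmgf : ∀ l : ℝ, Integrable (fun ω => Real.exp (l * Y ω)) μ)
    (hint : Integrable Y μ) :
    (∃ l : ℝ, 0 < l ∧ ∫ ω, Real.exp (l * Y ω) ∂μ = 1) ↔ ∫ ω, Y ω ∂μ < 0 :=
  ⟨fun ⟨l, hl, h1⟩ ↦ integral_neg_of_mgf_eq_one hl hpos hint (hmgf l) h1,
    exists_pos_mgf_eq_one hpos hmgf⟩

theorem stmt0 {Ω : Type*} [MeasurableSpace Ω] (μ : Measure Ω) [IsProbabilityMeasure μ]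
    (Y : Ω → ℝ) (hY : Measurable Y)
    (hpos : 0 < μ {ω | 0 < Y ω}) (hneg : 0 < μ {ω | Y ω < 0})
    (hmgf : ∀ l : ℝ, Integrable (fun ω => Real.exp (l * Y ω)) μ)
    (hint : Integrable Y μ) :
    (∃ l : ℝ, 0 < l ∧ ∫ ω, Real.exp (l * Y ω) ∂μ = 1) ↔ ∫ ω, Y ω ∂μ < 0 :=
  stmt0_general μ Y hpos hmgf hint
end

section
/- Let W₁, ..., W_K be i.i.d. nonnegative random variables with tail bound P(W_k ≥ x) ≤ e^{−λx} for all x ≥ 0, where λ > 0. Then for any 0 < θ < λ and d ≥ 0, log E[exp(θ·max(0, W_k − d))] ≤ (θ/(λ−θ))·e^{−dλ}. -/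
/-!
With `Y = max 0 (W - d)`, the layer-cake formula gives
`E[exp (θ Y)] - 1 = ∫₀^∞ θ exp (θ t) P(Y ≥ t) dt`, and `P(Y ≥ t) ≤ P(W ≥ d + t) ≤ exp (-λd) exp (-λt)`,
so the integral is at most `θ exp (-λd) / (λ - θ)`. Finally `log x ≤ x - 1`.
-/

open MeasureTheory Set Real

theorem intervalIntegral_mul_exp_mul (θ y : ℝ) :
    ∫ t in (0 : ℝ)..y, θ * exp (θ * t) = exp (θ * y) - 1 := by
  have hderiv : ∀ t ∈ uIcc 0 y, HasDerivAt (fun t => exp (θ * t)) (θ * exp (θ * t)) t :=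
    fun t _ => by simpa [mul_comm] using ((hasDerivAt_id t).const_mul θ).exp
  rw [intervalIntegral.integral_eq_sub_of_hasDerivAt hderiv
    ((by fun_prop : Continuous fun t => θ * exp (θ * t)).intervalIntegrable _ _)]
  simp

section ExponentialMoment

variable {α : Type*} [MeasurableSpace α] (μ : Measure α)

theorem lintegral_ofReal_exp_mul_sub_one {Y : α → ℝ} (hY0 : 0 ≤ᵐ[μ] Y) (hY : AEMeasurable Y μ)
    {θ : ℝ} (hθ : 0 ≤ θ) :
    ∫⁻ ω, ENNReal.ofReal (exp (θ * Y ω) - 1) ∂μ =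
      ∫⁻ t in Ioi 0, μ {ω | t ≤ Y ω} * ENNReal.ofReal (θ * exp (θ * t)) := by
  simpa only [intervalIntegral_mul_exp_mul] using
    lintegral_comp_eq_lintegral_meas_le_mul μ hY0 hY
      (fun _ _ => (by fun_prop : Continuous fun t => θ * exp (θ * t)).intervalIntegrable _ _)
      (ae_of_all _ fun t => by positivity)

theorem lintegral_ofReal_exp_mul_sub_one_le_of_tail {Y : α → ℝ} (hY0 : 0 ≤ᵐ[μ] Y)
    (hY : AEMeasurable Y μ) {θ lam C : ℝ} (hθ : 0 ≤ θ) (hθlam : θ < lam) (hC : 0 ≤ C)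
    (htail : ∀ t > 0, μ {ω | t ≤ Y ω} ≤ ENNReal.ofReal (C * exp (-(lam * t)))) :
    ∫⁻ ω, ENNReal.ofReal (exp (θ * Y ω) - 1) ∂μ ≤ ENNReal.ofReal (θ / (lam - θ) * C) := by
  have hdecay : θ - lam < 0 := by linarith
  rw [lintegral_ofReal_exp_mul_sub_one μ hY0 hY hθ]
  calc ∫⁻ t in Ioi 0, μ {ω | t ≤ Y ω} * ENNReal.ofReal (θ * exp (θ * t))
      ≤ ∫⁻ t in Ioi 0, ENNReal.ofReal (θ * C * exp ((θ - lam) * t)) := by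
        refine setLIntegral_mono (by fun_prop) fun t ht => ?_
        calc μ {ω | t ≤ Y ω} * ENNReal.ofReal (θ * exp (θ * t))
            ≤ ENNReal.ofReal (C * exp (-(lam * t))) * ENNReal.ofReal (θ * exp (θ * t)) :=
              mul_le_mul_left (htail t ht) _
          _ = ENNReal.ofReal (θ * C * exp ((θ - lam) * t)) := by
              rw [← ENNReal.ofReal_mul (by positivity),
                show (θ - lam) * t = θ * t + -(lam * t) by ring, exp_add]
              congr 1
              ring
    _ = ENNReal.ofReal (∫ t in Ioi 0, θ * C * exp ((θ - lam) * t)) :=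
        (ofReal_integral_eq_lintegral_ofReal
          ((integrableOn_exp_mul_Ioi hdecay 0).const_mul _) (ae_of_all _ fun t => by positivity)).symm
    _ = ENNReal.ofReal (θ / (lam - θ) * C) := by
        rw [integral_const_mul, integral_exp_mul_Ioi hdecay, mul_zero, exp_zero]
        congr 1
        rw [← neg_sub lam θ, div_neg]
        ring

theorem log_integral_le_of_lintegral_ofReal_sub_one_le [IsProbabilityMeasure μ] {f : α → ℝ}
    (hf : AEStronglyMeasurable f μ) (hf1 : ∀ᵐ ω ∂μ, 1 ≤ f ω) {c : ℝ} (hc : 0 ≤ c)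
    (h : ∫⁻ ω, ENNReal.ofReal (f ω - 1) ∂μ ≤ ENNReal.ofReal c) :
    log (∫ ω, f ω ∂μ) ≤ c := by
  have hnonneg : 0 ≤ᵐ[μ] fun ω => f ω - 1 := hf1.mono fun ω h => sub_nonneg.2 h
  have hsub_int : Integrable (fun ω => f ω - 1) μ :=
    ⟨hf.sub aestronglyMeasurable_const,
      (hasFiniteIntegral_iff_ofReal hnonneg).2 (h.trans_lt ENNReal.ofReal_lt_top)⟩
  have hsub_le : ∫ ω, (f ω - 1) ∂μ ≤ c := by
    rw [integral_eq_lintegral_of_nonneg_ae hnonneg hsub_int.1]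
    exact ENNReal.toReal_le_of_le_ofReal hc h
  have hf_int : Integrable f μ :=
    (hsub_int.add (integrable_const (1 : ℝ))).congr (ae_of_all _ fun ω => by simp)
  have hsplit : ∫ ω, f ω ∂μ = ∫ ω, (f ω - 1) ∂μ + 1 := by
    simp [integral_sub hf_int (integrable_const (1 : ℝ))]
  calc log (∫ ω, f ω ∂μ) ≤ ∫ ω, f ω ∂μ - 1 :=
        log_le_sub_one_of_pos (by linarith [integral_nonneg_of_ae hnonneg])
    _ ≤ c := by linarith

end ExponentialMoment

theorem measure_le_max_zero_sub_le_of_tail {Ω : Type*} [MeasurableSpace Ω] {μ : Measure Ω}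
    [IsFiniteMeasure μ] {W : Ω → ℝ} {lam d t : ℝ}
    (htail : ∀ x : ℝ, 0 ≤ x → (μ {ω | x ≤ W ω}).toReal ≤ exp (-(lam * x)))
    (hd : 0 ≤ d) (ht : 0 < t) :
    μ {ω | t ≤ max 0 (W ω - d)} ≤ ENNReal.ofReal (exp (-(d * lam)) * exp (-(lam * t))) := by
  have hsub : {ω | t ≤ max 0 (W ω - d)} ⊆ {ω | d + t ≤ W ω} :=
    fun ω (hω : t ≤ max 0 (W ω - d)) => show d + t ≤ W ω by
      rcases le_max_iff.1 hω with h | h <;> linarith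
  calc μ {ω | t ≤ max 0 (W ω - d)} ≤ μ {ω | d + t ≤ W ω} := measure_mono hsub
    _ ≤ ENNReal.ofReal (exp (-(lam * (d + t)))) := by
        rw [← ENNReal.ofReal_toReal (measure_ne_top μ _)]
        exact ENNReal.ofReal_le_ofReal (htail _ (by linarith))
    _ = ENNReal.ofReal (exp (-(d * lam)) * exp (-(lam * t))) := by
        rw [← exp_add]
        congr 2
        ring

theorem stmt5_general {Ω : Type*} [MeasurableSpace Ω] (μ : Measure Ω) [IsProbabilityMeasure μ]
    (W : Ω → ℝ) (hW : Measurable W)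
    (lam : ℝ)
    (htail : ∀ x : ℝ, 0 ≤ x → (μ {ω | x ≤ W ω}).toReal ≤ Real.exp (-(lam * x)))
    (θ d : ℝ) (hθ : 0 < θ) (hθlam : θ < lam) (hd : 0 ≤ d) :
    Real.log (∫ ω, Real.exp (θ * max 0 (W ω - d)) ∂μ) ≤
      θ / (lam - θ) * Real.exp (-(d * lam)) := by
  have hY : Measurable fun ω => max 0 (W ω - d) := measurable_const.max (hW.sub measurable_const)
  refine log_integral_le_of_lintegral_ofReal_sub_one_le μ (by fun_prop)
    (ae_of_all _ fun ω => one_le_exp (by positivity)) (by have := sub_pos.2 hθlam; positivity) ?_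
  exact lintegral_ofReal_exp_mul_sub_one_le_of_tail μ (ae_of_all _ fun ω => le_max_left _ _)
    hY.aemeasurable hθ.le hθlam (exp_pos _).le
    fun t ht => measure_le_max_zero_sub_le_of_tail htail hd ht

theorem stmt5 {Ω : Type*} [MeasurableSpace Ω] (μ : Measure Ω) [IsProbabilityMeasure μ]
    (W : Ω → ℝ) (hW : Measurable W) (hW0 : ∀ ω, 0 ≤ W ω)
    (lam : ℝ) (hlam : 0 < lam)
    (htail : ∀ x : ℝ, 0 ≤ x → (μ {ω | x ≤ W ω}).toReal ≤ Real.exp (-(lam * x)))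
    (θ d : ℝ) (hθ : 0 < θ) (hθlam : θ < lam) (hd : 0 ≤ d) :
    Real.log (∫ ω, Real.exp (θ * max 0 (W ω - d)) ∂μ) ≤
      θ / (lam - θ) * Real.exp (-(d * lam)) :=
  stmt5_general μ W hW lam htail θ d hθ hθlam hd
end

section
/- With μ_{ε,h} as above and M(α) = ess sup_x (f₁(x)^α − f₀(x)^α)/α < ∞, the supremum of μ_{ε,h} over all contamination densities g equals −((1−ε)/(1+α)) d_α(f₀, f₁) + ε M(α). Consequently, sup_g μ_{ε,h} > 0 if and only if ε > d_α(f₀,f₁) / (d_α(f₀,f₁) + (1+α)M(α)). -/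
/-!
Since `g ≥ 0` has total mass one and `ψ ≤ M` almost everywhere, `∫ ψ g ≤ M` for every
contamination density `g`. Conversely, for `M' < M` the set `{M' < ψ ≤ M}` has positive measure,
so it contains a set `A` of finite positive measure, and the uniform density on `A` gives
`∫ ψ g > M'`. Hence `M` is the least upper bound of the values `∫ ψ g`, and `μ_{ε,h}` is an
increasing affine function of `∫ ψ g`.
-/

open MeasureTheory

section

variable {X : Type*} [MeasurableSpace X] {μ : Measure X} {ψ : X → ℝ} {M M' : ℝ}

def densityMeans (μ : Measure X) (ψ : X → ℝ) : Set ℝ :=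
  {I | ∃ g : X → ℝ, Measurable g ∧ (∀ x, 0 ≤ g x) ∧ (∫ x, g x ∂μ = 1) ∧
    Integrable (fun x => ψ x * g x) μ ∧ I = ∫ x, ψ x * g x ∂μ}

theorem integral_mul_le_of_ae_le {g : X → ℝ} (hψ : ∀ᵐ x ∂μ, ψ x ≤ M) (hg0 : ∀ x, 0 ≤ g x)
    (hg1 : ∫ x, g x ∂μ = 1) (hψg : Integrable (fun x => ψ x * g x) μ) :
    ∫ x, ψ x * g x ∂μ ≤ M := by
  have hg : Integrable g μ := by
    by_contra h
    rw [integral_undef h] at hg1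
    exact zero_ne_one hg1
  calc ∫ x, ψ x * g x ∂μ ≤ ∫ x, M * g x ∂μ :=
        integral_mono_ae hψg (hg.const_mul M) <| by
          filter_upwards [hψ] with x hx using mul_le_mul_of_nonneg_right hx (hg0 x)
    _ = M := by rw [integral_const_mul, hg1, mul_one]

theorem measure_setOf_lt_ne_zero
    (hlub : ∀ M' : ℝ, (∀ᵐ x ∂μ, ψ x ≤ M') → M ≤ M') (hM' : M' < M) :
    μ {x | M' < ψ x} ≠ 0 := by
  intro h
  have : ∀ᵐ x ∂μ, ψ x ≤ M' := by
    rw [ae_iff]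
    simpa only [not_le] using h
  exact (hlub M' this).not_gt hM'

theorem exists_measure_ne_zero_ne_top_mapsTo_Ioc [SigmaFinite μ] (hψ : Measurable ψ)
    (hub : ∀ᵐ x ∂μ, ψ x ≤ M) (hpos : μ {x | M' < ψ x} ≠ 0) :
    ∃ A, MeasurableSet A ∧ μ A ≠ 0 ∧ μ A ≠ ⊤ ∧ Set.MapsTo ψ A (Set.Ioc M' M) := by
  have hnull : μ {x | M < ψ x} = 0 := by
    rw [ae_iff] at hub
    simpa only [not_le] using hub
  have hmeas : MeasurableSet ({x | M' < ψ x} \ {x | M < ψ x}) :=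
    (measurableSet_lt measurable_const hψ).diff (measurableSet_lt measurable_const hψ)
  have hpos' : 0 < μ ({x | M' < ψ x} \ {x | M < ψ x}) := by
    rw [measure_sdiff_null hnull]
    exact pos_iff_ne_zero.mpr hpos
  obtain ⟨A, hA, hAsub, hA0, hAtop⟩ := Measure.exists_subset_measure_lt_top hmeas hpos'
  exact ⟨A, hA, hA0.ne', hAtop.ne, fun x hx => ⟨(hAsub hx).1, not_lt.mp (hAsub hx).2⟩⟩

theorem exists_density_lt_integral_mul [SigmaFinite μ] (hψ : Measurable ψ)
    (hub : ∀ᵐ x ∂μ, ψ x ≤ M) (hlub : ∀ M' : ℝ, (∀ᵐ x ∂μ, ψ x ≤ M') → M ≤ M') (hM' : M' < M) :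
    ∃ I ∈ densityMeans μ ψ, M' < I := by
  obtain ⟨m, hM'm, hmM⟩ := exists_between hM'
  obtain ⟨A, hA, hA0, hAtop, hψA⟩ := exists_measure_ne_zero_ne_top_mapsTo_Ioc hψ hub
    (measure_setOf_lt_ne_zero hlub hmM)
  set c := μ.real A
  have hc : 0 < c := ENNReal.toReal_pos hA0 hAtop
  have hψ_int : IntegrableOn ψ A μ :=
    Measure.integrableOn_of_bounded hAtop hψ.aestronglyMeasurable <|
      (ae_restrict_iff' hA).mpr <| .of_forall fun x hx =>
        abs_le_max_abs_abs (hψA hx).1.le (hψA hx).2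
  have hψg : (fun x => ψ x * A.indicator (fun _ => c⁻¹) x) = A.indicator (fun x => ψ x * c⁻¹) :=
    funext fun x => (Set.indicator_mul_right A ψ _).symm
  refine ⟨_, ⟨A.indicator fun _ => c⁻¹, measurable_const.indicator hA,
    Set.indicator_nonneg fun _ _ => inv_nonneg.mpr hc.le, ?_, ?_, rfl⟩, ?_⟩
  · rw [integral_indicator_const _ hA, smul_eq_mul, mul_inv_cancel₀ hc.ne']
  · rw [hψg, integrable_indicator_iff hA]
    exact hψ_int.mul_const _
  · have hm : m * c ≤ ∫ x in A, ψ x ∂μ :=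
      setIntegral_ge_of_const_le_real hA hAtop (fun x hx => (hψA hx).1.le) hψ_int
    rw [hψg, integral_indicator hA, integral_mul_const, ← div_eq_mul_inv, lt_div_iff₀ hc]
    exact (mul_lt_mul_of_pos_right hM'm hc).trans_le hm

theorem isLUB_densityMeans [SigmaFinite μ] (hψ : Measurable ψ) (hub : ∀ᵐ x ∂μ, ψ x ≤ M)
    (hlub : ∀ M' : ℝ, (∀ᵐ x ∂μ, ψ x ≤ M') → M ≤ M') :
    IsLUB (densityMeans μ ψ) M := by
  refine ⟨?_, fun b hb => le_of_forall_lt fun M' hM' => ?_⟩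
  · rintro _ ⟨g, -, hg0, hg1, hψg, rfl⟩
    exact integral_mul_le_of_ae_le hub hg0 hg1 hψg
  · obtain ⟨I, hI, hMI⟩ := exists_density_lt_integral_mul hψ hub hlub hM'
    exact hMI.trans_le (hb hI)

end

theorem IsLUB.csSup_image_const_add_mul {S : Set ℝ} {M : ℝ} (hS : IsLUB S M) (C : ℝ) {ε : ℝ}
    (hε : 0 ≤ ε) : sSup ((fun I => C + ε * I) '' S) = C + ε * M := by
  have hmono : Monotone fun I : ℝ => C + ε * I := fun _ _ h => by
    simpa only [add_le_add_iff_left] using mul_le_mul_of_nonneg_left h hε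
  rw [← hS.csSup_eq hS.nonempty,
    hmono.map_csSup_of_continuousAt (by fun_prop) hS.nonempty hS.bddAbove]

theorem neg_div_mul_add_mul_pos_iff {a d M ε : ℝ} (ha : 0 < a) (hd : 0 < d + a * M) :
    0 < -((1 - ε) / a) * d + ε * M ↔ d / (d + a * M) < ε := by
  have h : -((1 - ε) / a) * d + ε * M = (ε * (d + a * M) - d) / a := by
    field_simp
    ring
  rw [h, div_lt_iff₀ hd, div_pos_iff_of_pos_right ha, sub_pos]

theorem stmt16 (α ε dα M : ℝ) (hα : 0 < α) (hε : ε ∈ Set.Ico (0:ℝ) 1)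
    (hdα : 0 < dα) (hM : 0 < M)
    (f₀ f₁ : ℝ → ℝ) (h₀m : Measurable f₀) (h₁m : Measurable f₁)
    (ψ : ℝ → ℝ) (hψ : ψ = fun x => (f₁ x ^ α - f₀ x ^ α) / α)
    (hub : ∀ᵐ x ∂(volume : Measure ℝ), ψ x ≤ M)
    (hlub : ∀ M' : ℝ, (∀ᵐ x ∂(volume : Measure ℝ), ψ x ≤ M') → M ≤ M') :
    sSup {v : ℝ | ∃ g : ℝ → ℝ, Measurable g ∧ (∀ x, 0 ≤ g x) ∧ (∫ x : ℝ, g x = 1) ∧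
        Integrable (fun x : ℝ => ψ x * g x) ∧
        v = -((1 - ε) / (1 + α)) * dα + ε * ∫ x : ℝ, ψ x * g x} =
      -((1 - ε) / (1 + α)) * dα + ε * M ∧
    (0 < -((1 - ε) / (1 + α)) * dα + ε * M ↔ dα / (dα + (1 + α) * M) < ε) := by
  have hψm : Measurable ψ := hψ ▸ by fun_prop
  set C := -((1 - ε) / (1 + α)) * dα
  have hset : {v : ℝ | ∃ g : ℝ → ℝ, Measurable g ∧ (∀ x, 0 ≤ g x) ∧ (∫ x : ℝ, g x = 1) ∧
      Integrable (fun x : ℝ => ψ x * g x) ∧ v = C + ε * ∫ x : ℝ, ψ x * g x} =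
      (fun I => C + ε * I) '' densityMeans volume ψ := by
    ext v
    exact ⟨fun ⟨g, hg, hg0, hg1, hψg, hv⟩ => ⟨_, ⟨g, hg, hg0, hg1, hψg, rfl⟩, hv.symm⟩,
      fun ⟨_, ⟨g, hg, hg0, hg1, hψg, hI⟩, hv⟩ => ⟨g, hg, hg0, hg1, hψg, hI ▸ hv.symm⟩⟩
  refine ⟨?_, neg_div_mul_add_mul_pos_iff (by linarith) (by positivity)⟩
  rw [hset]
  exact (isLUB_densityMeans hψm hub hlub).csSup_image_const_add_mul C hε.1
end
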